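/- (Proposition 1.1, BLER) Fix N ≥ 0, m > 0 and γ̇ > 0, and let 0 < ε₁ < ε₂ < 1/2. Suppose q₁ > 0, q₂ > 0 satisfy Q(q₁) = ε₁ and Q(q₂) = ε₂, and that 1 − ρ(γ̇)·q₁/√m > 0. Then F(q₁) > F(q₂), where F(q) = exp((N·ln2/m + μ(γ̇)·q/√m)/(1 − ρ(γ̇)·q/√m)) − 1; that is, the EAR function is strictly decreasing with respect to the block error rate ε. -/
import Mathlib


open MeasureTheory

/-- The Gaussian Q-function Q(x) = (1/√(2π))·∫ₓ^∞ exp(−t²/2) dt. -/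
noncomputable def Qfun (x : ℝ) : ℝ :=
  (Real.sqrt (2 * Real.pi))⁻¹ * ∫ t in Set.Ioi x, Real.exp (-t ^ 2 / 2)

/-- ρ(γ) = 1/((1+γ)·√(γ²+2γ)) -/
noncomputable def rho (γ : ℝ) : ℝ := 1 / ((1 + γ) * Real.sqrt (γ ^ 2 + 2 * γ))

/-- μ(γ) = √(γ²+2γ)/(1+γ) − ln(1+γ)/((1+γ)·√(γ²+2γ)) -/
noncomputable def mu (γ : ℝ) : ℝ :=
  Real.sqrt (γ ^ 2 + 2 * γ) / (1 + γ) -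
    Real.log (1 + γ) / ((1 + γ) * Real.sqrt (γ ^ 2 + 2 * γ))

/-- The EAR function expressed through q = Q⁻¹(ε):
F(q) = exp((N·ln2/m + μ(γ̇)·q/√m)/(1 − ρ(γ̇)·q/√m)) − 1. -/
noncomputable def Fear (N m γ' q : ℝ) : ℝ :=
  Real.exp ((N * Real.log 2 / m + mu γ' * q / Real.sqrt m) /
    (1 - rho γ' * q / Real.sqrt m)) - 1

lemma gauss_integrableOn (x : ℝ) :
    IntegrableOn (fun t : ℝ => Real.exp (-t ^ 2 / 2)) (Set.Ioi x) := by
  have : (fun t : ℝ => Real.exp (-t ^ 2 / 2)) = fun t : ℝ => Real.exp (-(1/2) * t ^ 2) := by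
    ext t; ring_nf
  rw [this]
  exact (integrable_exp_neg_mul_sq (by norm_num)).integrableOn

lemma cross_ineq (A u r s q₁ q₂ : ℝ) (hA : 0 ≤ A) (hu : 0 < u) (hr : 0 < r) (hs : 0 < s)
    (hq : q₂ < q₁) :
    (A + u * q₂ / s) * (1 - r * q₁ / s) < (A + u * q₁ / s) * (1 - r * q₂ / s) := by
  have key : (A + u * q₁ / s) * (1 - r * q₂ / s) - (A + u * q₂ / s) * (1 - r * q₁ / s)
      = (u * (q₁ - q₂)) / s + (A * r * (q₁ - q₂)) / s := by
    field_simp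
    ring
  have h1 : 0 < (u * (q₁ - q₂)) / s := div_pos (mul_pos hu (sub_pos.mpr hq)) hs
  have h2 : 0 ≤ (A * r * (q₁ - q₂)) / s :=
    div_nonneg (mul_nonneg (mul_nonneg hA hr.le) (sub_pos.mpr hq).le) hs.le
  linarith

lemma Qfun_strictAnti {a b : ℝ} (hab : a < b) : Qfun b < Qfun a := by
  unfold Qfun
  have hsqrt : 0 < (Real.sqrt (2 * Real.pi))⁻¹ := by
    positivity
  apply mul_lt_mul_of_pos_left _ hsqrt
  have hsplit : Set.Ioi a = Set.Ioc a b ∪ Set.Ioi b := (Set.Ioc_union_Ioi_eq_Ioi hab.le).symm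
  have hdisj : Disjoint (Set.Ioc a b) (Set.Ioi b) := by
    apply Set.disjoint_left.mpr
    intro t ht ht2
    exact absurd (Set.mem_Ioi.mp ht2) (not_lt.mpr ht.2)
  have hInt1 : IntegrableOn (fun t : ℝ => Real.exp (-t ^ 2 / 2)) (Set.Ioc a b) :=
    (gauss_integrableOn a).mono_set (by rw [hsplit]; exact Set.subset_union_left)
  have heq : ∫ t in Set.Ioi a, Real.exp (-t ^ 2 / 2)
      = (∫ t in Set.Ioc a b, Real.exp (-t ^ 2 / 2)) + ∫ t in Set.Ioi b, Real.exp (-t ^ 2 / 2) := by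
    rw [hsplit]
    exact setIntegral_union hdisj measurableSet_Ioi hInt1 (gauss_integrableOn b)
  rw [heq]
  have hposint : 0 < ∫ t in Set.Ioc a b, Real.exp (-t ^ 2 / 2) := by
    rw [← intervalIntegral.integral_of_le hab.le]
    apply intervalIntegral.intervalIntegral_pos_of_pos_on
    · exact (intervalIntegrable_iff_integrableOn_Ioc_of_le hab.le).mpr hInt1
    · intro t _; positivity
    · exact hab
  linarith

/-- The EAR function is strictly decreasing w.r.t. the BLER ε. -/
theorem stmt_12 (N m γ' ε₁ ε₂ q₁ q₂ : ℝ) (hN : 0 ≤ N) (hm : 0 < m) (hγ' : 0 < γ')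
    (hε₁ : 0 < ε₁) (hε₁₂ : ε₁ < ε₂) (hε₂ : ε₂ < 1 / 2)
    (hq₁ : 0 < q₁) (hq₂ : 0 < q₂)
    (hQ₁ : Qfun q₁ = ε₁) (hQ₂ : Qfun q₂ = ε₂)
    (hpos : 0 < 1 - rho γ' * q₁ / Real.sqrt m) :
    Fear N m γ' q₁ > Fear N m γ' q₂ := by
  -- q₂ < q₁
  have hq : q₂ < q₁ := by
    rcases lt_trichotomy q₂ q₁ with h | h | h
    · exact h
    · exfalso; rw [h, hQ₁] at hQ₂; linarith
    · have := Qfun_strictAnti h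
      rw [hQ₁, hQ₂] at this; linarith
  -- positivity facts
  have hsg : 0 < γ' ^ 2 + 2 * γ' := by nlinarith
  have hsqrtg : 0 < Real.sqrt (γ' ^ 2 + 2 * γ') := Real.sqrt_pos.mpr hsg
  have h1γ : 0 < 1 + γ' := by linarith
  have hr : 0 < rho γ' := by unfold rho; positivity
  have hu : 0 < mu γ' := by
    unfold mu
    rw [sub_pos, div_lt_div_iff₀ (by positivity) h1γ]
    have hlog : Real.log (1 + γ') < γ' := by
      have := Real.log_lt_sub_one_of_pos h1γ (by linarith)
      linarith
    have hsq : Real.sqrt (γ' ^ 2 + 2 * γ') * Real.sqrt (γ' ^ 2 + 2 * γ') = γ' ^ 2 + 2 * γ' :=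
      Real.mul_self_sqrt hsg.le
    nlinarith
  have hs : 0 < Real.sqrt m := Real.sqrt_pos.mpr hm
  have hA : 0 ≤ N * Real.log 2 / m := by
    have : (0:ℝ) < Real.log 2 := Real.log_pos (by norm_num)
    positivity
  -- denominators
  have hD2 : 0 < 1 - rho γ' * q₂ / Real.sqrt m := by
    have : rho γ' * q₂ / Real.sqrt m < rho γ' * q₁ / Real.sqrt m := by gcongr
    linarith
  unfold Fear
  have hexp : (N * Real.log 2 / m + mu γ' * q₂ / Real.sqrt m) /
      (1 - rho γ' * q₂ / Real.sqrt m) <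
      (N * Real.log 2 / m + mu γ' * q₁ / Real.sqrt m) /
      (1 - rho γ' * q₁ / Real.sqrt m) := by
    rw [div_lt_div_iff₀ hD2 hpos]
    exact cross_ineq _ _ _ _ _ _ hA hu hr hs hq
  have := Real.exp_lt_exp.mpr hexp
  linarith
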